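/- Let U ⊆ ℝⁿ be open and k, l positive integers. If v₁,…,v_p : U → ℝ are nonnegative functions such that each vᵢ^{1/(2kl)} is of class C^k on U, then (v₁ + … + v_p)^{1/l} is of class C^k on U. -/

import Mathlib

/-!
With `w i = v i ^ (1 / (2kl))`, the sum `(∑ i, v i) ^ (1 / l)` is `h ∘ w` for
`h y = (∑ i, y i ^ (2kl)) ^ (1 / l)`. The function `h` is smooth away from the origin and
positively homogeneous of degree `2k > k`. Such a function is `C^k` everywhere: its `j`-th
derivative is homogeneous of degree `2k - j ≥ 1`, hence bounded by `C ‖y‖ ^ (2k - j)`, which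
makes it continuous at `0`, and differentiable there with derivative `0` while `2k - j ≥ 2`.
-/

open Filter Asymptotics Topology

-- The induction in `IsPosHomogeneous.contDiff` replaces `F` by `E →L[ℝ] F`, so both spaces
-- share one universe.
universe u

def IsPosHomogeneous {E F : Type*} [AddCommGroup E] [Module ℝ E] [AddCommGroup F] [Module ℝ F]
    (f : E → F) (d : ℕ) : Prop :=
  ∀ c : ℝ, 0 < c → ∀ y, f (c • y) = c ^ d • f y

namespace IsPosHomogeneous

variable {E F : Type u} [NormedAddCommGroup E] [NormedSpace ℝ E]
  [NormedAddCommGroup F] [NormedSpace ℝ F] {f : E → F} {d : ℕ}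

theorem map_zero (hf : IsPosHomogeneous f d) (hd : d ≠ 0) : f 0 = 0 := by
  have h := hf 2 two_pos 0
  rw [smul_zero] at h
  have h' : ((2 : ℝ) ^ d - 1) • f 0 = 0 := by rw [sub_smul, one_smul, ← h, sub_self]
  exact (smul_eq_zero.mp h').resolve_left (sub_ne_zero.2 (one_lt_pow₀ one_lt_two hd).ne')

theorem exists_norm_le [ProperSpace E] (hf : IsPosHomogeneous f d) (hd : d ≠ 0)
    (hcont : ContinuousOn f {0}ᶜ) : ∃ M, ∀ y, ‖f y‖ ≤ M * ‖y‖ ^ d := by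
  have hsphere : Metric.sphere (0 : E) 1 ⊆ {0}ᶜ := fun y hy h => by simp_all
  obtain ⟨M, hM⟩ := (isCompact_sphere (0 : E) 1).exists_bound_of_continuousOn
    (hcont.mono hsphere)
  refine ⟨M, fun y => ?_⟩
  rcases eq_or_ne y 0 with rfl | hy
  · simp [hf.map_zero hd, zero_pow hd]
  have hny : 0 < ‖y‖ := norm_pos_iff.mpr hy
  have hu : ‖y‖⁻¹ • y ∈ Metric.sphere (0 : E) 1 := by
    simp [norm_smul, hny.ne']
  have hfy : f y = ‖y‖ ^ d • f (‖y‖⁻¹ • y) := by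
    rw [← hf _ hny, smul_smul, mul_inv_cancel₀ hny.ne', one_smul]
  rw [hfy, norm_smul, Real.norm_of_nonneg (by positivity), mul_comm M]
  exact mul_le_mul_of_nonneg_left (hM _ hu) (by positivity)

theorem isBigO [ProperSpace E] (hf : IsPosHomogeneous f d) (hd : d ≠ 0)
    (hcont : ContinuousOn f {0}ᶜ) : f =O[𝓝 0] fun y => ‖y - 0‖ ^ d := by
  obtain ⟨M, hM⟩ := hf.exists_norm_le hd hcont
  refine IsBigO.of_bound M (Eventually.of_forall fun y => ?_)
  simpa [abs_of_nonneg] using hM y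

theorem fderiv (hf : IsPosHomogeneous f (d + 1)) : IsPosHomogeneous (fderiv ℝ f) d := by
  intro c hc y
  have h := fderiv_comp_smul (f := f) (x := y) c
  rw [show (f <| c • ·) = c ^ (d + 1) • f from funext (hf c hc), fderiv_const_smul_field,
    Pi.smul_apply, pow_succ', mul_smul] at h
  exact (smul_right_injective _ hc.ne' h).symm

theorem contDiff [ProperSpace E] {k : ℕ} (hf : IsPosHomogeneous f d) (hkd : k < d)
    (hf' : ContDiffOn ℝ k f {0}ᶜ) : ContDiff ℝ k f := by
  induction k generalizing F d with
  | zero =>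
    refine contDiff_zero.2 (continuous_iff_continuousAt.2 fun y => ?_)
    rcases eq_or_ne y 0 with rfl | hy
    · have hlim := (hf.isBigO hkd.ne' hf'.continuousOn).trans_tendsto
        ((continuous_norm.comp (continuous_sub_right (0 : E))).pow d |>.tendsto' 0 0
          (by simp [zero_pow hkd.ne']))
      rwa [ContinuousAt, hf.map_zero hkd.ne']
    · exact hf'.continuousOn.continuousAt (isOpen_compl_singleton.mem_nhds hy)
  | succ k ih =>
    obtain ⟨d, rfl⟩ : ∃ d', d = d' + 1 := ⟨d - 1, by omega⟩
    have h0 : HasFDerivAt f (0 : E →L[ℝ] F) 0 :=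
      (hf.isBigO (by omega) hf'.continuousOn).hasFDerivAt (by omega)
    have hdiff : Differentiable ℝ f := fun y => by
      rcases eq_or_ne y 0 with rfl | hy
      · exact h0.differentiableAt
      · exact (hf'.differentiableOn (by simp)).differentiableAt
          (isOpen_compl_singleton.mem_nhds hy)
    rw [Nat.cast_succ, contDiff_succ_iff_fderiv]
    exact ⟨hdiff, by simp, ih hf.fderiv (Nat.lt_of_succ_lt_succ hkd)
      (hf'.fderiv_of_isOpen isOpen_compl_singleton (by rw [Nat.cast_succ]))⟩

end IsPosHomogeneous

section SumPow

variable {ι : Type*} [Fintype ι]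

theorem isPosHomogeneous_sum_pow_rpow {l : ℕ} (hl : l ≠ 0) (d : ℕ) :
    IsPosHomogeneous (fun y : ι → ℝ => (∑ i, y i ^ (2 * d * l)) ^ ((1 : ℝ) / l)) (2 * d) := by
  intro c hc y
  have hsum : 0 ≤ ∑ i, y i ^ (2 * d * l) :=
    Finset.sum_nonneg fun i _ => ((even_two_mul d).mul_right l).pow_nonneg _
  simp only [Pi.smul_apply, smul_eq_mul, mul_pow, ← Finset.mul_sum]
  rw [Real.mul_rpow (by positivity) hsum, pow_mul, one_div,
    Real.pow_rpow_inv_natCast (by positivity) hl]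

theorem contDiffOn_sum_pow_rpow {N : ℕ} (hN : Even N) (r : ℝ) {n : WithTop ℕ∞} :
    ContDiffOn ℝ n (fun y : ι → ℝ => (∑ i, y i ^ N) ^ r) {0}ᶜ := by
  intro y hy
  obtain ⟨j, hj⟩ := Function.ne_iff.mp hy
  have hpos : 0 < ∑ i, y i ^ N :=
    Finset.sum_pos' (fun i _ => hN.pow_nonneg _) ⟨j, Finset.mem_univ _, hN.pow_pos hj⟩
  have hsmooth : ContDiff ℝ n fun y : ι → ℝ => ∑ i, y i ^ N :=
    ContDiff.sum fun i _ => (contDiff_apply ℝ ℝ i).pow N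
  exact (hsmooth.contDiffAt.rpow_const_of_ne hpos.ne').contDiffWithinAt

end SumPow

theorem stmt_7_general (n p k l : ℕ) (hk : 0 < k) (hl : 0 < l)
    (U : Set (Fin n → ℝ))
    (v : Fin p → (Fin n → ℝ) → ℝ)
    (hnonneg : ∀ i, ∀ x ∈ U, 0 ≤ v i x)
    (hv : ∀ i, ContDiffOn ℝ k (fun x => (v i x) ^ ((1 : ℝ) / (2 * k * l))) U) :
    ContDiffOn ℝ k (fun x => (∑ i, v i x) ^ ((1 : ℝ) / l)) U := by
  have hG : ContDiff ℝ k fun y : Fin p → ℝ => (∑ i, y i ^ (2 * k * l)) ^ ((1 : ℝ) / l) :=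
    (isPosHomogeneous_sum_pow_rpow hl.ne' k).contDiff (by omega)
      (contDiffOn_sum_pow_rpow ((even_two_mul k).mul_right l) _)
  have hexp : (1 : ℝ) / (2 * k * l) = ((2 * k * l : ℕ) : ℝ)⁻¹ := by push_cast; ring
  refine (hG.comp_contDiffOn (contDiffOn_pi.2 hv)).congr fun x hx => ?_
  refine congrArg (· ^ ((1 : ℝ) / l)) (Finset.sum_congr rfl fun i _ => ?_)
  rw [hexp, Real.rpow_inv_natCast_pow (hnonneg i x hx) (by positivity)]

theorem stmt_7 (n p k l : ℕ) (hk : 0 < k) (hl : 0 < l)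
    (U : Set (Fin n → ℝ)) (hU : IsOpen U)
    (v : Fin p → (Fin n → ℝ) → ℝ)
    (hnonneg : ∀ i, ∀ x ∈ U, 0 ≤ v i x)
    (hv : ∀ i, ContDiffOn ℝ k (fun x => (v i x) ^ ((1 : ℝ) / (2 * k * l))) U) :
    ContDiffOn ℝ k (fun x => (∑ i, v i x) ^ ((1 : ℝ) / l)) U :=
  stmt_7_general n p k l hk hl U v hnonneg hv
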